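/- The field ℚ^tr of all totally real algebraic numbers has the γ-Northcott property for every real γ > 0. -/

import Mathlib

/-!
Let `α ≠ 0, ±1` be totally real, with primitive integer minimal polynomial `p` of degree `d` and
leading coefficient `a`. Then `p(0) p(1) p(-1) = a³ ∏ (t - t³)`, the product running over the
conjugates `t` of `α`, is a nonzero integer, while every real `t` satisfies
`2 |t - t³| ≤ max(1, |t|)⁴`. Hence `2^d ≤ M(p)⁴` for the Mahler measure `M(p) = |a| ∏ max(1, |t|)`,
which is Schinzel's bound `h(α) ≥ log 2 / 4`. So `h_γ(α) < C` bounds `deg(α)^γ` by `4C / log 2`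
and `h(α)` by `C`, and Northcott's theorem for integer polynomials of bounded degree and Mahler
measure leaves only finitely many such `α`.
-/

open Polynomial

noncomputable section

/-- The primitive integer minimal polynomial of an algebraic number `x ∈ ℂ`. -/
def intMinpoly (x : ℂ) : Polynomial ℤ :=
  (IsLocalization.integerNormalization (nonZeroDivisors ℤ) (minpoly ℚ x)).primPart

/-- `deg(x) = [ℚ(x):ℚ]`, the degree of an algebraic number. -/
def degQ (x : ℂ) : ℕ := (minpoly ℚ x).natDegree

/-- The absolute logarithmic Weil height of an algebraic number `x`, given as
`(1/deg x) · log (|a₀| · ∏ max(1,|conjugate|))` where `a₀` is the leading coefficient of the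
primitive integer minimal polynomial of `x` and the product runs over the complex roots
of that polynomial (i.e. the conjugates of `x`). -/
def weilHeight (x : ℂ) : ℝ :=
  (degQ x : ℝ)⁻¹ *
    Real.log (((intMinpoly x).leadingCoeff.natAbs : ℝ) *
      (((intMinpoly x).map (Int.castRingHom ℂ)).roots.map
        (fun z => max 1 ‖z‖)).prod)

/-- The `γ`-weighted Weil height `h_γ(x) = deg(x)^γ · h(x)`. -/
def wheight (γ : ℝ) (x : ℂ) : ℝ := (degQ x : ℝ) ^ γ * weilHeight x

/-- `x` is a root of unity. -/
def IsRootOfUnity (x : ℂ) : Prop := ∃ n : ℕ, 0 < n ∧ x ^ n = 1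

/-- `μ_A`, the set of roots of unity contained in `A`. -/
def muSet (A : Set ℂ) : Set ℂ := {a ∈ A | IsRootOfUnity a}

/-- `A` has the `γ`-Northcott property: for every `C > 0` there are only finitely many
`a ∈ A` with `h_γ(a) < C`. -/
def NorthcottProp (γ : ℝ) (A : Set ℂ) : Prop :=
  ∀ C : ℝ, 0 < C → {a ∈ A | wheight γ a < C}.Finite

/-- `A` has the `γ`-Bogomolov property: for some `C > 0` there are only finitely many
`a ∈ A ∖ μ_A` with `h_γ(a) < C`. -/
def BogomolovProp (γ : ℝ) (A : Set ℂ) : Prop :=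
  ∃ C : ℝ, 0 < C ∧ {a ∈ A \ muSet A | wheight γ a < C}.Finite

/-- The `γ`-Northcott number `Nor_γ(A) = inf {C > 0 | N_γ(A,C) = ∞}` (equal to `∞` if
`N_γ(A,C)` is finite for every `C`). -/
def northcottNumber (γ : ℝ) (A : Set ℂ) : EReal :=
  sInf {x : EReal | ∃ C : ℝ, x = (C : EReal) ∧ 0 < C ∧ ¬ {a ∈ A | wheight γ a < C}.Finite}

/-- `I_N(A) = {γ ∈ ℝ | A has γ-(N)}`. -/
def IN (A : Set ℂ) : Set ℝ := {γ | NorthcottProp γ A}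

/-- `I_B(A) = {γ ∈ ℝ | A has γ-(B)}`. -/
def IB (A : Set ℂ) : Set ℝ := {γ | BogomolovProp γ A}

/-- A complex number is totally real if it is algebraic over `ℚ` and all of its conjugates
(the complex roots of its minimal polynomial) are real. -/
def QtrSet : Set ℂ :=
  {x | IsAlgebraic ℚ x ∧ ∀ z ∈ ((minpoly ℚ x).map (algebraMap ℚ ℂ)).roots, z.im = 0}

namespace Polynomial

open IsLocalization in
theorem exists_map_primPart_integerNormalization_eq_C_mul {R K : Type*} [CommRing R] [IsDomain R]
    [NormalizedGCDMonoid R] [Field K] [Algebra R K] [IsFractionRing R K] {p : K[X]} (hp : p ≠ 0) :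
    ∃ c : K, c ≠ 0 ∧
      (integerNormalization (nonZeroDivisors R) p).primPart.map (algebraMap R K) = C c * p := by
  obtain ⟨b, hb, hspec⟩ := integerNormalization_spec (nonZeroDivisors R) p
  set n := integerNormalization (nonZeroDivisors R) p
  have hcontent : algebraMap R K n.content ≠ 0 := by
    rw [map_ne_zero_iff _ (IsFractionRing.injective R K), Ne, content_eq_zero_iff,
      IsFractionRing.integerNormalization_eq_zero_iff]
    exact hp
  have hb0 : algebraMap R K b ≠ 0 :=
    (map_ne_zero_iff _ (IsFractionRing.injective R K)).2 (nonZeroDivisors.ne_zero hb)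
  refine ⟨algebraMap R K b / algebraMap R K n.content, div_ne_zero hb0 hcontent, ?_⟩
  rw [n.eq_C_content_mul_primPart, Polynomial.map_mul, map_C, ← algebraMap_smul K b p,
    smul_eq_C_mul] at hspec
  rw [div_eq_inv_mul, C_mul, mul_assoc, ← hspec, ← mul_assoc, ← C_mul, inv_mul_cancel₀ hcontent,
    C_1, one_mul]

theorem norm_leadingCoeff_map_intCast (p : ℤ[X]) :
    ‖(p.map (Int.castRingHom ℂ)).leadingCoeff‖ = |(p.leadingCoeff : ℝ)| := by
  rw [leadingCoeff_map_of_injective (RingHom.injective_int _), eq_intCast, Complex.norm_intCast]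

end Polynomial

theorem two_mul_abs_sub_pow_three_le (t : ℝ) : 2 * |t - t ^ 3| ≤ max 1 |t| ^ 4 := by
  have hfactor : |t - t ^ 3| = |t| * |1 - |t| ^ 2| := by
    rw [← abs_mul, sq_abs, abs_eq_abs]
    left; ring
  rw [hfactor]
  set u := |t|
  have hu : 0 ≤ u := abs_nonneg t
  rcases le_total u 1 with h | h
  · rw [max_eq_left h, abs_of_nonneg (by nlinarith)]
    nlinarith [sq_nonneg (3 * u ^ 2 - 1), mul_nonneg hu (sq_nonneg (3 * u ^ 2 - 1))]
  · rw [max_eq_right h, abs_of_nonpos (by nlinarith)]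
    nlinarith [sq_nonneg (u - 1), mul_nonneg (mul_nonneg hu hu) hu]

theorem Complex.two_mul_norm_sub_pow_three_le {z : ℂ} (hz : z.im = 0) :
    2 * ‖z - z ^ 3‖ ≤ max 1 ‖z‖ ^ 4 := by
  rw [← Complex.re_add_im z, hz, Complex.ofReal_zero, zero_mul, add_zero, ← Complex.ofReal_pow,
    ← Complex.ofReal_sub, Complex.norm_real, Complex.norm_real, Real.norm_eq_abs,
    Real.norm_eq_abs]
  exact two_mul_abs_sub_pow_three_le z.re

namespace Polynomial

theorem two_pow_natDegree_le_mahlerMeasure_pow_four {p : ℤ[X]}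
    (hreal : ∀ z ∈ (p.map (Int.castRingHom ℂ)).roots, z.im = 0)
    (h0 : p.eval 0 ≠ 0) (h1 : p.eval 1 ≠ 0) (hm1 : p.eval (-1) ≠ 0) :
    (2 : ℝ) ^ p.natDegree ≤ (p.map (Int.castRingHom ℂ)).mahlerMeasure ^ 4 := by
  set q := p.map (Int.castRingHom ℂ)
  set A := ‖q.leadingCoeff‖
  have hA : 1 ≤ A := by
    have hlc : 1 ≤ |(p.leadingCoeff : ℝ)| :=
      mod_cast Int.one_le_abs (leadingCoeff_ne_zero.2 fun hp ↦ h0 (by simp [hp]))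
    exact hlc.trans_eq (norm_leadingCoeff_map_intCast p).symm
  have hcard : q.roots.card = p.natDegree :=
    IsAlgClosed.card_roots_map_eq_natDegree_of_injective p (RingHom.injective_int _)
  have hvalues : 1 ≤ ‖q.eval 0 * q.eval 1 * q.eval (-1)‖ := by
    have : q.eval 0 * q.eval 1 * q.eval (-1) = ((p.eval 0 * p.eval 1 * p.eval (-1) : ℤ) : ℂ) := by
      have heval (n : ℤ) : q.eval (n : ℂ) = ((p.eval n : ℤ) : ℂ) := eval_intCast_map _ p n
      simp [← heval]
    rw [this, Complex.norm_intCast]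
    exact_mod_cast Int.one_le_abs (mul_ne_zero (mul_ne_zero h0 h1) hm1)
  have hsplit := IsAlgClosed.splits q
  have hfactor : q.eval 0 * q.eval 1 * q.eval (-1) =
      q.leadingCoeff ^ 3 * (q.roots.map fun z ↦ z - z ^ 3).prod := by
    rw [hsplit.eval_eq_prod_roots, hsplit.eval_eq_prod_roots, hsplit.eval_eq_prod_roots]
    have hcubic : (fun z : ℂ ↦ z - z ^ 3) = fun z ↦ (0 - z) * (1 - z) * (-1 - z) := by
      ext z; ring
    rw [hcubic, Multiset.prod_map_mul, Multiset.prod_map_mul]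
    ring
  have hroots : 2 ^ p.natDegree * (q.roots.map fun z ↦ ‖z - z ^ 3‖).prod ≤
      (q.roots.map fun z ↦ max 1 ‖z‖).prod ^ 4 :=
    calc 2 ^ p.natDegree * (q.roots.map fun z ↦ ‖z - z ^ 3‖).prod
        = (q.roots.map fun z ↦ 2 * ‖z - z ^ 3‖).prod := by
          rw [Multiset.prod_map_mul, Multiset.map_const', Multiset.prod_replicate, hcard]
      _ ≤ (q.roots.map fun z ↦ max 1 ‖z‖ ^ 4).prod :=
          Multiset.prod_map_le_prod_map₀ _ _ (fun _ _ ↦ by positivity)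
            fun z hz ↦ Complex.two_mul_norm_sub_pow_three_le (hreal z hz)
      _ = (q.roots.map fun z ↦ max 1 ‖z‖).prod ^ 4 := Multiset.prod_map_pow
  calc (2 : ℝ) ^ p.natDegree ≤ 2 ^ p.natDegree * ‖q.eval 0 * q.eval 1 * q.eval (-1)‖ * A :=
        (le_mul_of_one_le_right (by positivity) hvalues).trans
          (le_mul_of_one_le_right (by positivity) hA)
    _ = A ^ 4 * (2 ^ p.natDegree * (q.roots.map fun z ↦ ‖z - z ^ 3‖).prod) := by
        have hnorm : ‖(q.roots.map fun z ↦ z - z ^ 3).prod‖ =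
            (q.roots.map fun z ↦ ‖z - z ^ 3‖).prod :=
          (map_multiset_prod (normHom (α := ℂ)) _).trans (by rw [Multiset.map_map]; rfl)
        rw [hfactor, norm_mul, norm_pow, hnorm]; ring
    _ ≤ A ^ 4 * (q.roots.map fun z ↦ max 1 ‖z‖).prod ^ 4 := by gcongr
    _ = q.mahlerMeasure ^ 4 := by rw [mahlerMeasure_eq_leadingCoeff_mul_prod_roots, mul_pow]

end Polynomial

section intMinpoly

variable {x : ℂ}

theorem exists_map_intMinpoly_eq_C_mul_minpoly (hx : IsAlgebraic ℚ x) :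
    ∃ c : ℚ, c ≠ 0 ∧ (intMinpoly x).map (algebraMap ℤ ℚ) = C c * minpoly ℚ x :=
  exists_map_primPart_integerNormalization_eq_C_mul (minpoly.ne_zero hx.isIntegral)

theorem exists_map_intMinpoly_eq_C_mul_map_minpoly (hx : IsAlgebraic ℚ x) :
    ∃ c : ℚ, c ≠ 0 ∧ (intMinpoly x).map (Int.castRingHom ℂ) =
      C (c : ℂ) * (minpoly ℚ x).map (algebraMap ℚ ℂ) := by
  obtain ⟨c, hc, h⟩ := exists_map_intMinpoly_eq_C_mul_minpoly hx
  refine ⟨c, hc, ?_⟩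
  rw [show Int.castRingHom ℂ = (algebraMap ℚ ℂ).comp (algebraMap ℤ ℚ) from RingHom.ext_int _ _,
    ← map_map, h, Polynomial.map_mul, map_C]
  rfl

theorem intMinpoly_ne_zero (hx : IsAlgebraic ℚ x) : intMinpoly x ≠ 0 := by
  obtain ⟨c, hc, h⟩ := exists_map_intMinpoly_eq_C_mul_minpoly hx
  intro h0
  rw [h0, Polynomial.map_zero, eq_comm, mul_eq_zero, C_eq_zero] at h
  exact h.elim hc (minpoly.ne_zero hx.isIntegral)

theorem natDegree_intMinpoly (hx : IsAlgebraic ℚ x) : (intMinpoly x).natDegree = degQ x := by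
  obtain ⟨c, hc, h⟩ := exists_map_intMinpoly_eq_C_mul_minpoly hx
  rw [← natDegree_map_eq_of_injective (algebraMap ℤ ℚ).injective_int, h,
    natDegree_C_mul hc, degQ]

theorem roots_map_intMinpoly (hx : IsAlgebraic ℚ x) :
    ((intMinpoly x).map (Int.castRingHom ℂ)).roots =
      ((minpoly ℚ x).map (algebraMap ℚ ℂ)).roots := by
  obtain ⟨c, hc, h⟩ := exists_map_intMinpoly_eq_C_mul_map_minpoly hx
  rw [h, roots_C_mul _ (by exact_mod_cast hc)]

theorem aeval_intMinpoly (hx : IsAlgebraic ℚ x) : aeval x (intMinpoly x) = 0 := by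
  obtain ⟨c, hc, h⟩ := exists_map_intMinpoly_eq_C_mul_map_minpoly hx
  rw [aeval_def, ← eval_map, algebraMap_int_eq, h, eval_mul, eval_map_algebraMap, minpoly.aeval,
    mul_zero]

theorem eval_intMinpoly_ne_zero (hx : IsAlgebraic ℚ x) {n : ℤ} (hxn : x ≠ n) :
    (intMinpoly x).eval n ≠ 0 := by
  obtain ⟨c, hc, h⟩ := exists_map_intMinpoly_eq_C_mul_minpoly hx
  intro h0
  have hroot : aeval (n : ℚ) (minpoly ℚ x) = 0 := by
    have := congrArg (eval (n : ℚ)) h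
    rw [eval_intCast_map, Int.cast_id, h0, map_zero, eval_mul, eval_C, eq_comm, mul_eq_zero,
      ← coe_aeval_eq_eval] at this
    exact this.resolve_left hc
  have hmin : minpoly ℚ x = X - C (n : ℚ) := by
    rw [minpoly.eq_of_irreducible_of_monic (minpoly.irreducible hx.isIntegral) hroot
      (minpoly.monic hx.isIntegral), minpoly.eq_X_sub_C']
  have := minpoly.aeval ℚ x
  rw [hmin, map_sub, aeval_X, aeval_C, sub_eq_zero, eq_ratCast, Rat.cast_intCast] at this
  exact hxn this

end intMinpoly

section weilHeight

variable {x : ℂ}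

theorem weilHeight_eq_log_mahlerMeasure (x : ℂ) :
    weilHeight x =
      (degQ x : ℝ)⁻¹ * Real.log ((intMinpoly x).map (Int.castRingHom ℂ)).mahlerMeasure := by
  rw [weilHeight, mahlerMeasure_eq_leadingCoeff_mul_prod_roots, norm_leadingCoeff_map_intCast,
    Nat.cast_natAbs, Int.cast_abs]

theorem one_le_degQ (hx : IsAlgebraic ℚ x) : 1 ≤ degQ x :=
  minpoly.natDegree_pos hx.isIntegral

theorem weilHeight_nonneg (hx : IsAlgebraic ℚ x) : 0 ≤ weilHeight x := by
  rw [weilHeight_eq_log_mahlerMeasure]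
  exact mul_nonneg (by positivity)
    (Real.log_nonneg (one_le_mahlerMeasure_of_ne_zero (intMinpoly_ne_zero hx)))

theorem weilHeight_le_wheight {γ : ℝ} (hγ : 0 ≤ γ) (hx : IsAlgebraic ℚ x) :
    weilHeight x ≤ wheight γ x :=
  le_mul_of_one_le_left (weilHeight_nonneg hx)
    (Real.one_le_rpow (mod_cast one_le_degQ hx) hγ)

theorem finite_setOf_degQ_le_weilHeight_lt (N : ℕ) (C : ℝ) :
    {x : ℂ | IsAlgebraic ℚ x ∧ degQ x ≤ N ∧ weilHeight x < C}.Finite := by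
  let B : NNReal := ⟨Real.exp (|C| * N), (Real.exp_pos _).le⟩
  refine ((finite_mahlerMeasure_le N B).biUnion fun p _ ↦ p.rootSet_finite ℂ).subset ?_
  rintro x ⟨hx, hdeg, hC⟩
  have hd : (0 : ℝ) < degQ x := mod_cast one_le_degQ hx
  refine Set.mem_biUnion (x := intMinpoly x) ⟨(natDegree_intMinpoly hx).trans_le hdeg, ?_⟩
    ((mem_rootSet).2 ⟨intMinpoly_ne_zero hx, aeval_intMinpoly hx⟩)
  rw [weilHeight_eq_log_mahlerMeasure, inv_mul_lt_iff₀ hd] at hC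
  have hM := one_le_mahlerMeasure_of_ne_zero (intMinpoly_ne_zero hx)
  refine (Real.log_le_iff_le_exp (by linarith)).1 (hC.le.trans ?_)
  calc (degQ x : ℝ) * C ≤ degQ x * |C| := by gcongr; exact le_abs_self C
    _ ≤ |C| * N := by rw [mul_comm]; gcongr

theorem log_two_div_four_le_weilHeight (hx : x ∈ QtrSet) (h0 : x ≠ 0) (h1 : x ≠ 1)
    (hm1 : x ≠ -1) : Real.log 2 / 4 ≤ weilHeight x := by
  obtain ⟨halg, hreal⟩ := hx
  have hpow := two_pow_natDegree_le_mahlerMeasure_pow_four (p := intMinpoly x)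
    (by rwa [roots_map_intMinpoly halg])
    (eval_intMinpoly_ne_zero halg (n := 0) (by simpa using h0))
    (eval_intMinpoly_ne_zero halg (n := 1) (by simpa using h1))
    (eval_intMinpoly_ne_zero halg (n := -1) (by simpa using hm1))
  have hlog := Real.log_le_log (by positivity) hpow
  rw [Real.log_pow, Real.log_pow, natDegree_intMinpoly halg] at hlog
  have hd : (0 : ℝ) < degQ x := mod_cast one_le_degQ halg
  rw [weilHeight_eq_log_mahlerMeasure, le_inv_mul_iff₀ hd]
  push_cast at hlog
  linarith

theorem degQ_lt_of_le_weilHeight {γ D C : ℝ} (hγ : 0 < γ) (hD : 0 < D) (hDx : D ≤ weilHeight x)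
    (hxC : wheight γ x < C) : (degQ x : ℝ) < (C / D) ^ γ⁻¹ := by
  have hdγ : (degQ x : ℝ) ^ γ * D < C :=
    (mul_le_mul_of_nonneg_left hDx (by positivity)).trans_lt hxC
  have hC : 0 ≤ C := (by positivity : (0 : ℝ) ≤ (degQ x : ℝ) ^ γ * D).trans hdγ.le
  rwa [Real.lt_rpow_inv_iff_of_pos (by positivity) (div_nonneg hC hD.le) hγ, lt_div_iff₀ hD]

end weilHeight

/-- The field `ℚ^tr` of all totally real algebraic numbers has the `γ`-Northcott property
for every real `γ > 0`. -/
theorem qtr_northcott (γ : ℝ) (hγ : 0 < γ) : NorthcottProp γ QtrSet := by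
  intro C _
  have hD : 0 < Real.log 2 / 4 := by positivity
  refine ((Set.toFinite {0, 1, -1}).union
    (finite_setOf_degQ_le_weilHeight_lt ⌊(C / (Real.log 2 / 4)) ^ γ⁻¹⌋₊ C)).subset ?_
  rintro x ⟨hx, hxC⟩
  by_cases hsmall : x = 0 ∨ x = 1 ∨ x = -1
  · exact Or.inl hsmall
  obtain ⟨h0, h1, hm1⟩ : x ≠ 0 ∧ x ≠ 1 ∧ x ≠ -1 := by tauto
  have hdeg := degQ_lt_of_le_weilHeight hγ hD (log_two_div_four_le_weilHeight hx h0 h1 hm1) hxC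
  exact Or.inr ⟨hx.1, Nat.le_floor hdeg.le, (weilHeight_le_wheight hγ.le hx.1).trans_lt hxC⟩

end
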